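/- Let K be an irreducible row-stochastic matrix on ℕ. If π and π′ are both stationary probability mass functions for K, then π = π′ (the stationary distribution, when it exists, is unique). -/

import Mathlib

/-- `n`-step transition probabilities of a kernel on `ℕ`. -/
noncomputable def matpow (K : ℕ → ℕ → ℝ) : ℕ → ℕ → ℕ → ℝ
  | 0 => fun s t => if s = t then 1 else 0
  | n + 1 => fun s t => ∑' r, matpow K n s r * K r t

/-- A row-stochastic matrix on `ℕ`. -/
def RowStochastic (K : ℕ → ℕ → ℝ) : Prop :=
  (∀ s t, 0 ≤ K s t) ∧ ∀ s, HasSum (fun t => K s t) 1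

/-- Irreducibility: every state reaches every state in some number `n ≥ 1` of steps. -/
def ChainIrreducible (K : ℕ → ℕ → ℝ) : Prop :=
  ∀ s t, ∃ n, 1 ≤ n ∧ 0 < matpow K n s t

/-- A probability mass function on `ℕ`. -/
def IsPMF (π : ℕ → ℝ) : Prop :=
  (∀ s, 0 ≤ π s) ∧ HasSum π 1

/-- Stationarity of `π` for `K`: `∑_s π s * K s t = π t` for all `t`. -/
def IsStationaryPMF (K : ℕ → ℕ → ℝ) (π : ℕ → ℝ) : Prop :=
  ∀ t, HasSum (fun s => π s * K s t) (π t)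

/-!
The difference `h = π - π'` is a summable signed stationary measure of total mass `0`.
Since `K` preserves the mass of nonnegative measures and `|h| ≤ |h| K` pointwise, `|h|` is
stationary as well. At a state `t` with `h t ≥ 0` this gives equality in
`|∑ₛ h s K s t| ≤ ∑ₛ |h s| K s t`, so `h s ≥ 0` whenever `K s t > 0`. By irreducibility `h` has
constant sign, and mass `0` forces `h = 0`.
-/

theorem HasSum.eq_of_le {ι α : Type*} [AddCommGroup α] [PartialOrder α] [IsOrderedAddMonoid α]
    [TopologicalSpace α] [IsTopologicalAddGroup α] [OrderClosedTopology α] {f g : ι → α} {a : α}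
    (hf : HasSum f a) (hg : HasSum g a) (hfg : f ≤ g) : f = g := by
  have hdiff : g - f = 0 :=
    (hasSum_zero_iff_of_nonneg fun i => sub_nonneg.2 (hfg i)).1 (by simpa using hg.sub hf)
  exact (sub_eq_zero.1 hdiff).symm

section Matpow

variable {K : ℕ → ℕ → ℝ}

theorem matpow_nonneg (hK : ∀ s t, 0 ≤ K s t) : ∀ n s t, 0 ≤ matpow K n s t
  | 0, s, t => by simp only [matpow]; split_ifs <;> norm_num
  | n + 1, s, t => tsum_nonneg fun r => mul_nonneg (matpow_nonneg hK n s r) (hK r t)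

theorem exists_pos_of_matpow_succ_pos (hK : ∀ s t, 0 ≤ K s t) {n s t : ℕ}
    (hpos : 0 < matpow K (n + 1) s t) : ∃ r, 0 < matpow K n s r ∧ 0 < K r t := by
  by_contra! hne
  refine hpos.not_ge (tsum_nonpos fun r => ?_)
  rcases (matpow_nonneg hK n s r).lt_or_eq with hr | hr
  · exact mul_nonpos_of_nonneg_of_nonpos hr.le (hne r hr)
  · rw [← hr, zero_mul]

end Matpow

namespace RowStochastic

variable {K : ℕ → ℕ → ℝ}

theorem le_one (hK : RowStochastic K) (s t : ℕ) : K s t ≤ 1 :=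
  le_hasSum (hK.2 s) t fun u _ => hK.1 s u

theorem summable_mul (hK : RowStochastic K) {μ : ℕ → ℝ} (hμ : Summable μ) (t : ℕ) :
    Summable fun s => μ s * K s t :=
  hμ.norm.of_norm_bounded fun s => by
    rw [norm_mul, Real.norm_of_nonneg (hK.1 s t)]
    exact mul_le_of_le_one_right (norm_nonneg _) (hK.le_one s t)

theorem hasSum_tsum_mul (hK : RowStochastic K) {μ : ℕ → ℝ} (hμ₀ : ∀ s, 0 ≤ μ s)
    (hμ : Summable μ) : HasSum (fun t => ∑' s, μ s * K s t) (∑' s, μ s) := by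
  have hrow : ∀ s, HasSum (fun t => μ s * K s t) (μ s) := fun s => by
    simpa using (hK.2 s).mul_left (μ s)
  have hsummable : Summable fun p : ℕ × ℕ => μ p.1 * K p.1 p.2 :=
    (summable_prod_of_nonneg fun p => mul_nonneg (hμ₀ _) (hK.1 _ _)).2
      ⟨fun s => (hrow s).summable, hμ.congr fun s => (hrow s).tsum_eq.symm⟩
  have htotal : ∑' p : ℕ × ℕ, μ p.1 * K p.1 p.2 = ∑' s, μ s := by
    rw [hsummable.tsum_prod' fun s => (hrow s).summable]
    exact tsum_congr fun s => (hrow s).tsum_eq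
  have hswap : HasSum (fun p : ℕ × ℕ => μ p.2 * K p.2 p.1) (∑' s, μ s) := by
    rw [← htotal]
    exact (Equiv.prodComm ℕ ℕ).hasSum_iff (f := fun p : ℕ × ℕ => μ p.1 * K p.1 p.2) |>.2
      hsummable.hasSum
  exact hswap.prod_fiberwise fun t => (hK.summable_mul hμ t).hasSum

variable {h : ℕ → ℝ}

theorem isStationaryPMF_abs (hK : RowStochastic K) (hh : Summable h)
    (hstat : IsStationaryPMF K h) : IsStationaryPMF K fun s => |h s| := by
  have habs : Summable fun s => |h s| := summable_abs_iff.2 hh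
  have hle : ∀ t, |h t| ≤ ∑' s, |h s| * K s t := fun t =>
    calc |h t| = ‖∑' s, h s * K s t‖ := by rw [(hstat t).tsum_eq, Real.norm_eq_abs]
      _ ≤ ∑' s, ‖h s * K s t‖ := norm_tsum_le_tsum_norm (hK.summable_mul hh t).norm
      _ = ∑' s, |h s| * K s t := by simp_rw [norm_mul, Real.norm_eq_abs, abs_of_nonneg (hK.1 _ t)]
  have heq := habs.hasSum.eq_of_le (hK.hasSum_tsum_mul (fun s => abs_nonneg _) habs) hle
  intro t
  convert (hK.summable_mul habs t).hasSum using 1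
  exact congrFun heq t

theorem nonneg_of_transition_pos (hK : RowStochastic K) (hh : Summable h)
    (hstat : IsStationaryPMF K h) {s t : ℕ} (hst : 0 < K s t) (ht : 0 ≤ h t) : 0 ≤ h s := by
  have hgap : HasSum (fun s => (|h s| - h s) * K s t) 0 := by
    simpa only [sub_mul, abs_of_nonneg ht, sub_self] using
      (hK.isStationaryPMF_abs hh hstat t).sub (hstat t)
  have hzero := congrFun ((hasSum_zero_iff_of_nonneg fun s =>
    mul_nonneg (sub_nonneg.2 (le_abs_self (h s))) (hK.1 s t)).1 hgap) s
  have habs : |h s| = h s := sub_eq_zero.1 ((mul_eq_zero.1 hzero).resolve_right hst.ne')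
  exact habs ▸ abs_nonneg (h s)

theorem nonneg_of_matpow_pos (hK : RowStochastic K) (hh : Summable h)
    (hstat : IsStationaryPMF K h) : ∀ {n s t : ℕ}, 0 < matpow K n s t → 0 ≤ h t → 0 ≤ h s
  | 0, s, t, hpos, ht => by
    simp only [matpow] at hpos
    split_ifs at hpos with hst
    · exact hst ▸ ht
    · exact absurd hpos (lt_irrefl 0)
  | _ + 1, _, _, hpos, ht => by
    obtain ⟨r, hsr, hrt⟩ := exists_pos_of_matpow_succ_pos hK.1 hpos
    exact nonneg_of_matpow_pos hK hh hstat hsr (hK.nonneg_of_transition_pos hh hstat hrt ht)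

theorem eq_zero_of_hasSum_zero (hK : RowStochastic K) (hirr : ChainIrreducible K)
    (hstat : IsStationaryPMF K h) (hmass : HasSum h 0) : h = 0 := by
  wlog h₀ : 0 ≤ h 0 generalizing h
  · have hneg := this (h := -h) (fun t => by simpa only [Pi.neg_apply, neg_mul] using (hstat t).neg)
      (by rw [← neg_zero]; exact hmass.neg) (by simpa using (not_le.1 h₀).le)
    exact neg_eq_zero.1 hneg
  have hnonneg : ∀ s, 0 ≤ h s := fun s =>
    have ⟨_, _, hpos⟩ := hirr s 0
    hK.nonneg_of_matpow_pos hmass.summable hstat hpos h₀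
  exact (hasSum_zero_iff_of_nonneg hnonneg).1 hmass

end RowStochastic

/-- The stationary distribution of an irreducible countable-state chain, when it
exists, is unique. -/
theorem stationary_unique
    (K : ℕ → ℕ → ℝ) (hK : RowStochastic K) (hirr : ChainIrreducible K)
    (π π' : ℕ → ℝ) (hπ : IsPMF π) (hstat : IsStationaryPMF K π)
    (hπ' : IsPMF π') (hstat' : IsStationaryPMF K π') :
    π = π' := by
  have hdiff : IsStationaryPMF K (π - π') := fun t => by
    simpa only [Pi.sub_apply, sub_mul] using (hstat t).sub (hstat' t)
  have hmass : HasSum (π - π') 0 := by rw [← sub_self 1]; exact hπ.2.sub hπ'.2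
  exact sub_eq_zero.1 (hK.eq_zero_of_hasSum_zero hirr hdiff hmass)
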